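/- Let η ∈ (0,1) and N > 0. Then ∑_{n=0}^∞ ∑_{k=0}^{n} p(n,k) · [log₂((1−η)N+1) + k log₂(1 + 1/((1−η)N))] · [log₂(N+1) + n log₂(1 + 1/N)] = log₂((1−η)N+1) log₂(N+1) + N log₂((1−η)N+1) log₂(1 + 1/N) + (1−η)N log₂(1 + 1/((1−η)N)) log₂(N+1) + (1−η)N(2N+1) log₂(1 + 1/((1−η)N)) log₂(1 + 1/N), where the series converges. -/

import Mathlib

open Real

/-- The joint photon-number distribution
`p(n,k) = (1/(N+1)) (N/(N+1))^n C(n,k) (1−η)^k η^{n−k}` (it vanishes for `k > n`,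
since then `C(n,k) = 0`). -/
noncomputable def jointDist (η N : ℝ) (n k : ℕ) : ℝ :=
  (1 / (N + 1)) * (N / (N + 1)) ^ n * (n.choose k : ℝ) * (1 - η) ^ k * η ^ (n - k)

/-!
The photon number `n` of the sender's thermal state is geometric with mean `N`, and given `n` the
number `k` of transmitted photons is binomial with mean `(1 - η) n`. Averaging the affine factor in
`k` first leaves the thermal average of a quadratic polynomial in `n`, which is read off from the
moments `1`, `N` and `N (2N + 1)` of the geometric distribution.
-/

open Finset

theorem sum_range_mul_choose_mul_pow_mul_pow {R : Type*} [CommSemiring R] (x y : R) (n : ℕ) :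
    ∑ k ∈ range (n + 1), (k : R) * n.choose k * x ^ k * y ^ (n - k)
      = n * x * (x + y) ^ (n - 1) := by
  cases n with
  | zero => simp
  | succ m =>
    rw [sum_range_succ', add_pow, mul_sum]
    simp only [Nat.cast_zero, zero_mul, add_zero, Nat.add_sub_cancel]
    refine sum_congr rfl fun i _ => ?_
    have hchoose := congrArg (Nat.cast : ℕ → R) (Nat.add_one_mul_choose_eq m i)
    push_cast at hchoose
    rw [Nat.add_sub_add_right]
    calc ((i + 1 : ℕ) : R) * ((m + 1).choose (i + 1) : ℕ) * x ^ (i + 1) * y ^ (m - i)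
        = ((m + 1).choose (i + 1) * (i + 1) : R) * x * x ^ i * y ^ (m - i) := by
          push_cast; ring
      _ = ((m + 1 : ℕ) : R) * x * (x ^ i * y ^ (m - i) * m.choose i) := by
          rw [← hchoose]; push_cast; ring

theorem hasSum_sq_mul_geometric_of_norm_lt_one {𝕜 : Type*} [NormedField 𝕜] [CompleteSpace 𝕜]
    {r : 𝕜} (hr : ‖r‖ < 1) :
    HasSum (fun n : ℕ => (n : 𝕜) ^ 2 * r ^ n) (r * (1 + r) / (1 - r) ^ 3) := by
  have hchoose := (hasSum_choose_mul_geometric_of_norm_lt_one 2 hr).mul_left 2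
  have hlin := (hasSum_coe_mul_geometric_of_norm_lt_one hr).mul_left 3
  have hgeom := (hasSum_geometric_of_norm_lt_one hr).mul_left 2
  have hne : 1 - r ≠ 0 := sub_ne_zero.mpr fun h => by simp [← h] at hr
  have H := (hchoose.sub hlin).sub hgeom
  rw [show 2 * (1 / (1 - r) ^ (2 + 1)) - 3 * (r / (1 - r) ^ 2) - 2 * (1 - r)⁻¹
    = r * (1 + r) / (1 - r) ^ 3 by field_simp; ring] at H
  -- `n ^ 2 = 2 C(n + 2, 2) - 3 n - 2`, from `(n + 2) C(n + 1, 1) = 2 C(n + 2, 2)`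
  refine H.congr_fun fun n => ?_
  have h := congrArg (Nat.cast : ℕ → 𝕜) (Nat.add_one_mul_choose_eq (n + 1) 1)
  push_cast [Nat.choose_one_right] at h
  linear_combination r ^ n * h

noncomputable def thermalDist (N : ℝ) (n : ℕ) : ℝ :=
  1 / (N + 1) * (N / (N + 1)) ^ n

theorem jointDist_eq_thermalDist_mul (η N : ℝ) (n k : ℕ) :
    jointDist η N n k = thermalDist N n * (n.choose k * (1 - η) ^ k * η ^ (n - k)) := by
  rw [jointDist, thermalDist]
  ring

section thermalDist

variable {N : ℝ}

theorem norm_div_add_one_lt_one (hN : 0 ≤ N) : ‖N / (N + 1)‖ < 1 := by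
  rw [norm_of_nonneg (by positivity), div_lt_one (by positivity)]
  linarith

theorem one_sub_div_add_one (hN : 0 ≤ N) : 1 - N / (N + 1) = 1 / (N + 1) := by
  field_simp
  ring

theorem hasSum_thermalDist (hN : 0 ≤ N) : HasSum (thermalDist N) 1 := by
  have H := (hasSum_geometric_of_norm_lt_one (norm_div_add_one_lt_one hN)).mul_left (1 / (N + 1))
  rw [one_sub_div_add_one hN, show 1 / (N + 1) * (1 / (N + 1))⁻¹ = 1 by field_simp] at H
  exact H

theorem hasSum_thermalDist_mul_cast (hN : 0 ≤ N) :
    HasSum (fun n => thermalDist N n * n) N := by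
  have H := (hasSum_coe_mul_geometric_of_norm_lt_one (norm_div_add_one_lt_one hN)).mul_left
    (1 / (N + 1))
  rw [one_sub_div_add_one hN, show 1 / (N + 1) * (N / (N + 1) / (1 / (N + 1)) ^ 2) = N by
    field_simp] at H
  exact H.congr_fun fun n => by rw [thermalDist]; ring

theorem hasSum_thermalDist_mul_sq (hN : 0 ≤ N) :
    HasSum (fun n => thermalDist N n * (n : ℝ) ^ 2) (N * (2 * N + 1)) := by
  have H := (hasSum_sq_mul_geometric_of_norm_lt_one (norm_div_add_one_lt_one hN)).mul_left
    (1 / (N + 1))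
  rw [one_sub_div_add_one hN, show 1 / (N + 1) * (N / (N + 1) * (1 + N / (N + 1))
    / (1 / (N + 1)) ^ 3) = N * (2 * N + 1) by field_simp; ring] at H
  exact H.congr_fun fun n => by rw [thermalDist]; ring

theorem hasSum_thermalDist_mul_quadratic (hN : 0 ≤ N) (a b c : ℝ) :
    HasSum (fun n => thermalDist N n * (a + b * n + c * (n : ℝ) ^ 2))
      (a + b * N + c * (N * (2 * N + 1))) := by
  have H := (((hasSum_thermalDist hN).mul_left a).add
    ((hasSum_thermalDist_mul_cast hN).mul_left b)).add
    ((hasSum_thermalDist_mul_sq hN).mul_left c)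
  rw [mul_one] at H
  exact H.congr_fun fun n => by ring

end thermalDist

theorem sum_jointDist_mul_affine (η N A B : ℝ) (n : ℕ) :
    ∑ k ∈ range (n + 1), jointDist η N n k * (A + k * B)
      = thermalDist N n * (A + (1 - η) * n * B) := by
  have hbinom : ∑ k ∈ range (n + 1), (n.choose k : ℝ) * (1 - η) ^ k * η ^ (n - k) = 1 := by
    calc ∑ k ∈ range (n + 1), (n.choose k : ℝ) * (1 - η) ^ k * η ^ (n - k)
        = ((1 - η) + η) ^ n := by rw [add_pow]; exact sum_congr rfl fun _ _ => by ring
      _ = 1 := by rw [sub_add_cancel, one_pow]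
  have hmean := sum_range_mul_choose_mul_pow_mul_pow (1 - η) η n
  rw [sub_add_cancel, one_pow, mul_one] at hmean
  calc ∑ k ∈ range (n + 1), jointDist η N n k * (A + k * B)
      = thermalDist N n * (A * ∑ k ∈ range (n + 1), (n.choose k : ℝ) * (1 - η) ^ k * η ^ (n - k)
          + B * ∑ k ∈ range (n + 1), (k : ℝ) * n.choose k * (1 - η) ^ k * η ^ (n - k)) := by
        rw [mul_sum, mul_sum, ← sum_add_distrib, mul_sum]
        exact sum_congr rfl fun k _ => by rw [jointDist_eq_thermalDist_mul]; ring
    _ = thermalDist N n * (A + (1 - η) * n * B) := by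
        rw [hbinom, hmean]
        ring

theorem joint_log_cross_term_general (η N : ℝ) (hN : 0 < N) :
    HasSum
      (fun n : ℕ => ∑ k ∈ Finset.range (n + 1),
        jointDist η N n k *
          (Real.logb 2 ((1 - η) * N + 1) + (k : ℝ) * Real.logb 2 (1 + 1 / ((1 - η) * N))) *
          (Real.logb 2 (N + 1) + (n : ℝ) * Real.logb 2 (1 + 1 / N)))
      (Real.logb 2 ((1 - η) * N + 1) * Real.logb 2 (N + 1)
        + N * Real.logb 2 ((1 - η) * N + 1) * Real.logb 2 (1 + 1 / N)
        + (1 - η) * N * Real.logb 2 (1 + 1 / ((1 - η) * N)) * Real.logb 2 (N + 1)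
        + (1 - η) * N * (2 * N + 1) * Real.logb 2 (1 + 1 / ((1 - η) * N))
            * Real.logb 2 (1 + 1 / N)) := by
  set A := Real.logb 2 ((1 - η) * N + 1)
  set B := Real.logb 2 (1 + 1 / ((1 - η) * N))
  set C := Real.logb 2 (N + 1)
  set D := Real.logb 2 (1 + 1 / N)
  have hsummand : ∀ n : ℕ,
      ∑ k ∈ range (n + 1), jointDist η N n k * (A + k * B) * (C + n * D)
        = thermalDist N n * (A * C + (A * D + (1 - η) * B * C) * n + (1 - η) * B * D * n ^ 2) := by
    intro n
    rw [← sum_mul, sum_jointDist_mul_affine]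
    ring
  simp_rw [hsummand]
  convert hasSum_thermalDist_mul_quadratic hN.le _ _ _ using 1
  ring

/-- For `η ∈ (0,1)` and `N > 0`,
`∑ₙ ∑_{k≤n} p(n,k) [log₂((1−η)N+1) + k log₂(1+1/((1−η)N))] [log₂(N+1) + n log₂(1+1/N)]`
converges and equals the displayed four-term expression. -/
theorem joint_log_cross_term (η N : ℝ) (hη : η ∈ Set.Ioo (0 : ℝ) 1) (hN : 0 < N) :
    HasSum
      (fun n : ℕ => ∑ k ∈ Finset.range (n + 1),
        jointDist η N n k *
          (Real.logb 2 ((1 - η) * N + 1) + (k : ℝ) * Real.logb 2 (1 + 1 / ((1 - η) * N))) *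
          (Real.logb 2 (N + 1) + (n : ℝ) * Real.logb 2 (1 + 1 / N)))
      (Real.logb 2 ((1 - η) * N + 1) * Real.logb 2 (N + 1)
        + N * Real.logb 2 ((1 - η) * N + 1) * Real.logb 2 (1 + 1 / N)
        + (1 - η) * N * Real.logb 2 (1 + 1 / ((1 - η) * N)) * Real.logb 2 (N + 1)
        + (1 - η) * N * (2 * N + 1) * Real.logb 2 (1 + 1 / ((1 - η) * N))
            * Real.logb 2 (1 + 1 / N)) :=
  joint_log_cross_term_general η N hN
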